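/- With the Q-polynomial distance-regular graph setup and the split subspaces Ṽ^{μν}_{i,j}, for 0 ≤ i,j ≤ D one has: (i) dim Ṽ^{↓↓}_{i,j} = dim Ṽ^{↑↑}_{D−i,D−j}; (ii) dim Ṽ^{↓↑}_{i,j} = dim Ṽ^{↑↓}_{D−i,D−j}. -/

import Mathlib

noncomputable section

open Matrix Finset
open scoped ComplexInnerProductSpace

/-- A `Q`-polynomial distance-regular graph setup: a finite connected simple graph `G` on `X`
with diameter `D ≥ 3`, intersection numbers `p h i j`, primitive idempotents
`E 0, …, E D` of the Bose–Mesner algebra with (distinct, real) eigenvalues `θ 0, …, θ D`,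
and Krein parameters `q h i j` satisfying the `Q`-polynomial condition with respect to the
ordering `E 0, …, E D`. -/
structure QPolyDRG (X : Type*) [Fintype X] [DecidableEq X] where
  G : SimpleGraph X
  conn : G.Connected
  D : ℕ
  hD3 : 3 ≤ D
  dist_le : ∀ y z : X, G.dist y z ≤ D
  dist_eq : ∃ y z : X, G.dist y z = D
  p : ℕ → ℕ → ℕ → ℕ
  hp : ∀ h i j : ℕ, h ≤ D → i ≤ D → j ≤ D → ∀ y z : X, G.dist y z = h →
    Nat.card {w : X // G.dist y w = i ∧ G.dist w z = j} = p h i j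
  E : ℕ → Matrix X X ℂ
  θ : ℕ → ℝ
  q : ℕ → ℕ → ℕ → ℝ
  hE0 : E 0 = ((Fintype.card X : ℂ))⁻¹ • Matrix.of (fun _ _ => (1 : ℂ))
  hEsum : ∑ i ∈ Finset.range (D + 1), E i = 1
  hEmul : ∀ i ≤ D, ∀ j ≤ D, E i * E j = if i = j then E i else 0
  hEsym : ∀ i ≤ D, (E i)ᵀ = E i
  hEreal : ∀ i ≤ D, ∀ y z : X, ((E i) y z).im = 0
  hEinM : ∀ i ≤ D, E i ∈ Submodule.span ℂ
    {B : Matrix X X ℂ | ∃ k ≤ D, B = Matrix.of (fun y z => if G.dist y z = k then (1 : ℂ) else 0)}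
  hAE : ∀ i ≤ D,
    Matrix.of (fun y z => if G.dist y z = 1 then (1 : ℂ) else 0) * E i = (θ i : ℂ) • E i
  θ_inj : ∀ i ≤ D, ∀ j ≤ D, θ i = θ j → i = j
  hKrein : ∀ i ≤ D, ∀ j ≤ D, Matrix.hadamard (E i) (E j) =
    ((Fintype.card X : ℂ))⁻¹ • ∑ h ∈ Finset.range (D + 1), (q h i j : ℂ) • E h
  hq_zero : ∀ h ≤ D, ∀ i ≤ D, ∀ j ≤ D, (i + j < h ∨ h + j < i ∨ h + i < j) → q h i j = 0
  hq_ne : ∀ h ≤ D, ∀ i ≤ D, ∀ j ≤ D, (h = i + j ∨ i = h + j ∨ j = h + i) → q h i j ≠ 0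

namespace QPolyDRG

variable {X : Type*} [Fintype X] [DecidableEq X] (S : QPolyDRG X) (x : X)

/-- The `i`-th distance matrix `A_i`. -/
def Amat (i : ℕ) : Matrix X X ℂ :=
  Matrix.of (fun y z => if S.G.dist y z = i then (1 : ℂ) else 0)

/-- The adjacency matrix `A = A_1`. -/
def adj : Matrix X X ℂ := S.Amat 1

/-- The `i`-th dual idempotent `E*_i = E*_i(x)` with respect to the base vertex `x`. -/
def Estar (i : ℕ) : Matrix X X ℂ :=
  Matrix.diagonal (fun y => if S.G.dist x y = i then (1 : ℂ) else 0)

/-- The dual adjacency matrix `A* = A*(x)`, with `(A*)_{yy} = |X| (E_1)_{xy}`. -/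
def Astar : Matrix X X ℂ :=
  Matrix.diagonal (fun y => (Fintype.card X : ℂ) * S.E 1 x y)

/-- The subspace `E_i V` of the standard module, with the convention that it is `0`
for `i ∉ {0, …, D}`. -/
def EV (i : ℤ) : Submodule ℂ (EuclideanSpace ℂ X) :=
  if 0 ≤ i ∧ i ≤ S.D then LinearMap.range (Matrix.toEuclideanLin (S.E i.toNat)) else ⊥

/-- The `i`-th subconstituent `E*_i V` with respect to `x`, with the convention that it is `0`
for `i ∉ {0, …, D}`. -/
def EstarV (i : ℤ) : Submodule ℂ (EuclideanSpace ℂ X) :=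
  if 0 ≤ i ∧ i ≤ S.D then LinearMap.range (Matrix.toEuclideanLin (S.Estar x i.toNat)) else ⊥

/-- The subconstituent (Terwilliger) algebra `T = T(x)`, generated by `A` and `A*`. -/
def Talg : Subalgebra ℂ (Matrix X X ℂ) := Algebra.adjoin ℂ {S.adj, S.Astar x}

/-- A `T`-module: a subspace `W ⊆ V` with `B W ⊆ W` for all `B ∈ T`. -/
def IsTModule (W : Submodule ℂ (EuclideanSpace ℂ X)) : Prop :=
  ∀ B ∈ S.Talg x, ∀ w ∈ W, Matrix.toEuclideanLin B w ∈ W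

/-- An irreducible `T`-module. -/
def IsIrredTModule (W : Submodule ℂ (EuclideanSpace ℂ X)) : Prop :=
  S.IsTModule x W ∧ W ≠ ⊥ ∧ ∀ W' ≤ W, S.IsTModule x W' → W' = ⊥ ∨ W' = W

/-- The subspace `E_i W`, with the convention that it is `0` for `i ∉ {0, …, D}`. -/
def EW (W : Submodule ℂ (EuclideanSpace ℂ X)) (i : ℤ) : Submodule ℂ (EuclideanSpace ℂ X) :=
  if 0 ≤ i ∧ i ≤ S.D then Submodule.map (Matrix.toEuclideanLin (S.E i.toNat)) W else ⊥

/-- The subspace `E*_i W`, with the convention that it is `0` for `i ∉ {0, …, D}`. -/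
def EstarW (W : Submodule ℂ (EuclideanSpace ℂ X)) (i : ℤ) : Submodule ℂ (EuclideanSpace ℂ X) :=
  if 0 ≤ i ∧ i ≤ S.D then Submodule.map (Matrix.toEuclideanLin (S.Estar x i.toNat)) W else ⊥


/-- The endpoint `ρ = min { i : E*_i W ≠ 0 }` of a `T`-module `W`. -/
def endpt (W : Submodule ℂ (EuclideanSpace ℂ X)) : ℕ :=
  sInf {i : ℕ | i ≤ S.D ∧ S.EstarW x W i ≠ ⊥}

/-- The dual endpoint `τ = min { i : E_i W ≠ 0 }` of a `T`-module `W`. -/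
def dualEndpt (W : Submodule ℂ (EuclideanSpace ℂ X)) : ℕ :=
  sInf {i : ℕ | i ≤ S.D ∧ S.EW W i ≠ ⊥}

/-- The diameter `d = |{ i : E*_i W ≠ 0 }| - 1` of a `T`-module `W`. -/
def diam (W : Submodule ℂ (EuclideanSpace ℂ X)) : ℕ :=
  Set.ncard {i : ℕ | i ≤ S.D ∧ S.EstarW x W i ≠ ⊥} - 1

/-- The dual diameter `|{ i : E_i W ≠ 0 }| - 1` of a `T`-module `W`. -/
def dualDiam (W : Submodule ℂ (EuclideanSpace ℂ X)) : ℕ :=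
  Set.ncard {i : ℕ | i ≤ S.D ∧ S.EW W i ≠ ⊥} - 1

/-- The split subspace `W^{μν}_h` of an irreducible `T`-module `W` with endpoint `ρ`,
dual endpoint `τ` and diameter `d`.  Here `μ = false` stands for `↓` and `μ = true`
for `↑`, and similarly for `ν`; e.g.
`W^{↓↓}_h = (E*_ρ W + ⋯ + E*_{ρ+h} W) ∩ (E_τ W + ⋯ + E_{τ+d-h} W)`. -/
def Wsplit (W : Submodule ℂ (EuclideanSpace ℂ X)) (ρ τ d : ℕ) (μ ν : Bool) (h : ℕ) :
    Submodule ℂ (EuclideanSpace ℂ X) :=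
  (if μ then ⨆ k ∈ Finset.Icc (ρ + d - h) (ρ + d), S.EstarW x W k
    else ⨆ k ∈ Finset.Icc ρ (ρ + h), S.EstarW x W k) ⊓
  (if ν then ⨆ k ∈ Finset.Icc (τ + h) (τ + d), S.EW W k
    else ⨆ k ∈ Finset.Icc τ (τ + d - h), S.EW W k)

/-- The subspace `V^{μν}_{i,j}` (interpreted as `0` if `i = -1` or `j = -1`).
Here `μ = false` stands for `↓` and `μ = true` for `↑`, and similarly for `ν`; e.g.
`V^{↓↓}_{i,j} = (E*_0 V + ⋯ + E*_i V) ∩ (E_0 V + ⋯ + E_j V)` and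
`V^{↑↑}_{i,j} = (E*_D V + ⋯ + E*_{D-i} V) ∩ (E_D V + ⋯ + E_{D-j} V)`. -/
def Vsplit (μ ν : Bool) (i j : ℤ) : Submodule ℂ (EuclideanSpace ℂ X) :=
  if 0 ≤ i ∧ 0 ≤ j then
    (if μ then ⨆ k ∈ Finset.Icc (S.D - i.toNat) S.D, S.EstarV x k
      else ⨆ k ∈ Finset.range (i.toNat + 1), S.EstarV x k) ⊓
    (if ν then ⨆ k ∈ Finset.Icc (S.D - j.toNat) S.D, S.EV k
      else ⨆ k ∈ Finset.range (j.toNat + 1), S.EV k)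
  else ⊥

/-- The subspace `Ṽ^{μν}_{i,j}`: the orthogonal complement of
`V^{μν}_{i-1,j} + V^{μν}_{i,j-1}` in `V^{μν}_{i,j}` with respect to the standard
Hermitian form. -/
def tildeV (μ ν : Bool) (i j : ℕ) : Submodule ℂ (EuclideanSpace ℂ X) :=
  S.Vsplit x μ ν i j ⊓ (S.Vsplit x μ ν ((i : ℤ) - 1) j ⊔ S.Vsplit x μ ν i ((j : ℤ) - 1))ᗮ

end QPolyDRG

/-!
Write `A_n = E*_0V + ⋯ + E*_{n-1}V` and `B_n = E_0V + ⋯ + E_{n-1}V`. Since both decompositions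
`V = ∑ E*_kV = ∑ E_kV` are orthogonal, `V^{↓↓}_{i,j} = A_{i+1} ∩ B_{j+1}` while
`V^{↑↑}_{D-i,D-j} = A_i^⊥ ∩ B_j^⊥`. Now `dim Ṽ_{i,j}` is the alternating sum of the dimensions of
the four intersections `A_{i or i+1} ∩ B_{j or j+1}`, and
`dim (A^⊥ ∩ B^⊥) = dim V - dim A - dim B + dim (A ∩ B)`: the linear terms cancel in the
alternating sum, so passing to orthogonal complements does not change it. The mixed case is the
same with the flag `B_n` replaced by its reverse.
-/

open Module

section Corner

variable {𝕜 E : Type*} [RCLike 𝕜] [NormedAddCommGroup E] [InnerProductSpace 𝕜 E]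

/-- The shape of `Ṽ_{i,j}` for `V_{i,j} = A_i ⊓ B_j` with flags `A_•`, `B_•`: here `A = A_{i-1}`,
`A' = A_i`, `B = B_{j-1}`, `B' = B_j`. -/
def Submodule.cornerCompl (A A' B B' : Submodule 𝕜 E) : Submodule 𝕜 E :=
  A' ⊓ B' ⊓ (A ⊓ B' ⊔ A' ⊓ B)ᗮ

variable [FiniteDimensional 𝕜 E]

theorem Submodule.finrank_cornerCompl_add {A A' B B' : Submodule 𝕜 E} (hA : A ≤ A')
    (hB : B ≤ B') :
    finrank 𝕜 (cornerCompl A A' B B') + finrank 𝕜 ↥(A ⊓ B') + finrank 𝕜 ↥(A' ⊓ B) =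
      finrank 𝕜 ↥(A' ⊓ B') + finrank 𝕜 ↥(A ⊓ B) := by
  have hle : A ⊓ B' ⊔ A' ⊓ B ≤ A' ⊓ B' := sup_le (inf_le_inf_right _ hA) (inf_le_inf_left _ hB)
  have hmeet : A ⊓ B' ⊓ (A' ⊓ B) = A ⊓ B :=
    le_antisymm (inf_le_inf inf_le_left inf_le_right)
      (le_inf (inf_le_inf_left _ hB) (inf_le_inf_right _ hA))
  have hsplit := finrank_add_inf_finrank_orthogonal hle
  have hsum := finrank_sup_add_finrank_inf_eq (A ⊓ B') (A' ⊓ B)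
  rw [hmeet] at hsum
  rw [cornerCompl, inf_comm]
  omega

theorem Submodule.finrank_orthogonal_inf_orthogonal_add (A B : Submodule 𝕜 E) :
    finrank 𝕜 ↥(Aᗮ ⊓ Bᗮ) + finrank 𝕜 A + finrank 𝕜 B = finrank 𝕜 E + finrank 𝕜 ↥(A ⊓ B) := by
  have hcompl := finrank_add_finrank_orthogonal (A ⊔ B)
  have hsum := finrank_sup_add_finrank_inf_eq A B
  rw [inf_orthogonal]
  omega

theorem Submodule.finrank_cornerCompl_orthogonal {A A' B B' : Submodule 𝕜 E} (hA : A ≤ A')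
    (hB : B ≤ B') :
    finrank 𝕜 (cornerCompl A'ᗮ Aᗮ B'ᗮ Bᗮ) = finrank 𝕜 (cornerCompl A A' B B') := by
  have h := finrank_cornerCompl_add hA hB
  have hperp := finrank_cornerCompl_add (orthogonal_le hA) (orthogonal_le hB)
  have h₁ := finrank_orthogonal_inf_orthogonal_add A B
  have h₂ := finrank_orthogonal_inf_orthogonal_add A B'
  have h₃ := finrank_orthogonal_inf_orthogonal_add A' B
  have h₄ := finrank_orthogonal_inf_orthogonal_add A' B'
  omega

end Corner

theorem LinearMap.orthogonal_biSup_range_eq {𝕜 E ι : Type*} [RCLike 𝕜] [NormedAddCommGroup E]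
    [InnerProductSpace 𝕜 E] [DecidableEq ι] {P : ι → E →ₗ[𝕜] E} {u s : Finset ι}
    (hsymm : ∀ k ∈ s, (P k).IsSymmetric) (horth : ∀ k ∈ s, ∀ l ∈ u \ s, P k ∘ₗ P l = 0)
    (hsum : ∑ k ∈ u, P k = LinearMap.id) :
    (⨆ k ∈ s, range (P k))ᗮ = ⨆ k ∈ u \ s, range (P k) := by
  have hker : (⨆ k ∈ s, range (P k))ᗮ = ⨅ k ∈ s, ker (P k) := by
    rw [iSup_subtype', ← Submodule.iInf_orthogonal, iInf_subtype']
    exact iInf_congr fun k => (hsymm k k.2).orthogonal_range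
  rw [hker]
  apply le_antisymm
  · intro v hv
    have hv' : ∀ k ∈ s, P k v = 0 := by simpa using hv
    have hdecomp : ∑ k ∈ u \ s, P k v = v := by
      rw [Finset.sum_subset sdiff_subset fun k _ hk => hv' k (by simp_all)]
      simpa using congr($hsum v)
    rw [← hdecomp]
    exact Submodule.sum_mem _ fun k hk =>
      le_iSup₂ (f := fun k (_ : k ∈ u \ s) => range (P k)) k hk (mem_range_self _ v)
  · refine iSup₂_le fun l hl => le_iInf₂ fun k hk => ?_
    rintro _ ⟨v, rfl⟩
    exact congr($(horth k hk l hl) v)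

theorem Matrix.toEuclideanLin_mul {𝕜 n : Type*} [RCLike 𝕜] [Fintype n] [DecidableEq n]
    (M N : Matrix n n 𝕜) : toEuclideanLin (M * N) = toEuclideanLin M ∘ₗ toEuclideanLin N := by
  rw [← coe_toEuclideanCLM_eq_toEuclideanLin, map_mul]
  rfl

namespace QPolyDRG

/-- The `n` lowest (`μ = false`) or `n` highest (`μ = true`) indices in `{0, …, D}`. -/
def flagIndex (D : ℕ) (μ : Bool) (n : ℕ) : Finset ℕ :=
  if μ then Icc (D + 1 - n) D else range n

def flag {α : Type*} [CompleteLattice α] (F : ℕ → α) (D : ℕ) (μ : Bool) (n : ℕ) : α :=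
  ⨆ k ∈ flagIndex D μ n, F k

section Flag

variable {D n : ℕ}

theorem flagIndex_zero (μ : Bool) : flagIndex D μ 0 = ∅ := by
  cases μ <;> simp [flagIndex]

theorem flagIndex_subset_succ (μ : Bool) (n : ℕ) : flagIndex D μ n ⊆ flagIndex D μ (n + 1) := by
  cases μ
  · exact range_subset_range.mpr n.le_succ
  · exact Icc_subset_Icc_left (by omega)

theorem flagIndex_subset_range (μ : Bool) (hn : n ≤ D + 1) : flagIndex D μ n ⊆ range (D + 1) := by
  intro k
  cases μ <;> simp only [flagIndex, Bool.false_eq_true, if_false, if_true, mem_range, mem_Icc] <;>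
    omega

theorem flagIndex_not {m : ℕ} (μ : Bool) (hmn : m + n = D + 1) :
    flagIndex D (!μ) m = range (D + 1) \ flagIndex D μ n := by
  ext k
  cases μ <;> simp only [flagIndex, Bool.not_false, Bool.not_true, Bool.false_eq_true, if_false,
    if_true, mem_sdiff, mem_range, mem_Icc] <;> omega

variable {α : Type*} [CompleteLattice α]

theorem flag_zero (F : ℕ → α) (μ : Bool) : flag F D μ 0 = ⊥ := by
  simp [flag, flagIndex_zero]

theorem flag_succ (F : ℕ → α) (μ : Bool) (m : ℕ) :
    flag F D μ (m + 1) = if μ then ⨆ k ∈ Icc (D - m) D, F k else ⨆ k ∈ range (m + 1), F k := by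
  cases μ
  · rfl
  · simp only [flag, flagIndex, if_true, Nat.add_sub_add_right]

theorem flag_mono (F : ℕ → α) (μ : Bool) (n : ℕ) : flag F D μ n ≤ flag F D μ (n + 1) :=
  biSup_mono fun _ hk => flagIndex_subset_succ μ n hk

theorem flag_congr {F G : ℕ → α} (h : ∀ k ≤ D, F k = G k) (μ : Bool) (hn : n ≤ D + 1) :
    flag F D μ n = flag G D μ n :=
  biSup_congr fun k hk => h k (Nat.lt_succ_iff.mp (mem_range.mp (flagIndex_subset_range μ hn hk)))

end Flag

variable {X : Type*} [Fintype X] [DecidableEq X]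

theorem orthogonal_flag {F : ℕ → Submodule ℂ (EuclideanSpace ℂ X)} {M : ℕ → Matrix X X ℂ} {D : ℕ}
    (hF : ∀ k ≤ D, F k = LinearMap.range (toEuclideanLin (M k)))
    (hherm : ∀ k ≤ D, (M k).IsHermitian) (hmul : ∀ k ≤ D, ∀ l ≤ D, k ≠ l → M k * M l = 0)
    (hsum : ∑ k ∈ range (D + 1), M k = 1) (μ : Bool) {m n : ℕ} (hmn : m + n = D + 1) :
    (flag F D μ n)ᗮ = flag F D (!μ) m := by
  have hle : ∀ k ∈ range (D + 1), k ≤ D := fun k hk => Nat.lt_succ_iff.mp (mem_range.mp hk)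
  have hs := flagIndex_subset_range (D := D) μ (n := n) (by omega)
  rw [flag_congr hF μ (by omega), flag_congr hF (!μ) (by omega), flag, flag, flagIndex_not μ hmn]
  refine LinearMap.orthogonal_biSup_range_eq
    (fun k hk => isSymmetric_toEuclideanLin_iff.mpr (hherm k (hle k (hs hk))))
    (fun k hk l hl => ?_) ?_
  · rw [← toEuclideanLin_mul, hmul k (hle k (hs hk)) l (hle l (sdiff_subset hl)) ?_, map_zero]
    rintro rfl
    exact (mem_sdiff.mp hl).2 hk
  · rw [← map_sum, hsum, ← coe_toEuclideanCLM_eq_toEuclideanLin, map_one]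
    rfl

variable (S : QPolyDRG X) (x : X)

theorem Estar_isHermitian (k : ℕ) : (S.Estar x k).IsHermitian := by
  refine isHermitian_diagonal_iff.mpr fun y => ?_
  split_ifs <;> simp [isSelfAdjoint_iff]

theorem Estar_mul_Estar_of_ne {k l : ℕ} (h : k ≠ l) : S.Estar x k * S.Estar x l = 0 := by
  rw [Estar, Estar, diagonal_mul_diagonal, ← diagonal_zero]
  congr 1
  ext y
  split_ifs with hk hl <;> simp_all

theorem sum_Estar : ∑ k ∈ range (S.D + 1), S.Estar x k = 1 := by
  ext y z
  rcases eq_or_ne y z with rfl | hyz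
  · simp [Estar, Matrix.sum_apply, Nat.lt_succ_iff.mpr (S.dist_le x y)]
  · simp [Estar, Matrix.sum_apply, hyz]

theorem E_isHermitian {k : ℕ} (hk : k ≤ S.D) : (S.E k).IsHermitian := by
  ext y z
  rw [conjTranspose_apply, ← transpose_apply (S.E k), S.hEsym k hk]
  exact Complex.conj_eq_iff_im.mpr (S.hEreal k hk y z)

theorem EstarV_natCast {k : ℕ} (hk : k ≤ S.D) :
    S.EstarV x k = LinearMap.range (toEuclideanLin (S.Estar x k)) := by
  simp [EstarV, hk]

theorem EV_natCast {k : ℕ} (hk : k ≤ S.D) :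
    S.EV k = LinearMap.range (toEuclideanLin (S.E k)) := by
  simp [EV, hk]

def EstarFlag (μ : Bool) (n : ℕ) : Submodule ℂ (EuclideanSpace ℂ X) :=
  flag (fun k : ℕ => S.EstarV x k) S.D μ n

def EFlag (μ : Bool) (n : ℕ) : Submodule ℂ (EuclideanSpace ℂ X) :=
  flag (fun k : ℕ => S.EV k) S.D μ n

theorem orthogonal_EstarFlag (μ : Bool) {m n : ℕ} (hmn : m + n = S.D + 1) :
    (S.EstarFlag x μ n)ᗮ = S.EstarFlag x (!μ) m :=
  orthogonal_flag (fun _ hk => S.EstarV_natCast x hk) (fun k _ => S.Estar_isHermitian x k)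
    (fun _ _ _ _ h => S.Estar_mul_Estar_of_ne x h) (S.sum_Estar x) μ hmn

theorem orthogonal_EFlag (μ : Bool) {m n : ℕ} (hmn : m + n = S.D + 1) :
    (S.EFlag μ n)ᗮ = S.EFlag (!μ) m :=
  orthogonal_flag (fun _ hk => S.EV_natCast hk) (fun _ hk => S.E_isHermitian hk)
    (fun k hk l hl h => by rw [S.hEmul k hk l hl, if_neg h]) S.hEsum μ hmn

theorem Vsplit_eq (μ ν : Bool) {a b : ℤ} (ha : -1 ≤ a) (hb : -1 ≤ b) :
    S.Vsplit x μ ν a b = S.EstarFlag x μ (a + 1).toNat ⊓ S.EFlag ν (b + 1).toNat := by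
  by_cases hab : 0 ≤ a ∧ 0 ≤ b
  · rw [Vsplit, if_pos hab, show (a + 1).toNat = a.toNat + 1 by omega,
      show (b + 1).toNat = b.toNat + 1 by omega, EstarFlag, EFlag, flag_succ, flag_succ]
  · rw [Vsplit, if_neg hab]
    obtain rfl | rfl : a = -1 ∨ b = -1 := by omega
    · simp [EstarFlag, flag_zero]
    · simp [EFlag, flag_zero]

theorem tildeV_eq_cornerCompl (μ ν : Bool) (i j : ℕ) :
    S.tildeV x μ ν i j = Submodule.cornerCompl (S.EstarFlag x μ i) (S.EstarFlag x μ (i + 1))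
      (S.EFlag ν j) (S.EFlag ν (j + 1)) := by
  rw [tildeV, Vsplit_eq _ _ _ _ (by omega) (by omega), Vsplit_eq _ _ _ _ (by omega) (by omega),
    Vsplit_eq _ _ _ _ (by omega) (by omega), Submodule.cornerCompl]
  simp only [Int.sub_add_cancel, Int.toNat_natCast, ← Nat.cast_add_one]

theorem finrank_tildeV_not_not (μ ν : Bool) {i j : ℕ} (hi : i ≤ S.D) (hj : j ≤ S.D) :
    finrank ℂ (S.tildeV x (!μ) (!ν) (S.D - i) (S.D - j)) = finrank ℂ (S.tildeV x μ ν i j) := by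
  rw [tildeV_eq_cornerCompl, tildeV_eq_cornerCompl,
    ← S.orthogonal_EstarFlag x μ (m := S.D - i) (n := i + 1) (by omega),
    ← S.orthogonal_EstarFlag x μ (m := S.D - i + 1) (n := i) (by omega),
    ← S.orthogonal_EFlag ν (m := S.D - j) (n := j + 1) (by omega),
    ← S.orthogonal_EFlag ν (m := S.D - j + 1) (n := j) (by omega)]
  exact Submodule.finrank_cornerCompl_orthogonal (flag_mono _ _ _) (flag_mono _ _ _)

end QPolyDRG

open QPolyDRG in
/-- `dim Ṽ^{↓↓}_{i,j} = dim Ṽ^{↑↑}_{D-i,D-j}` and `dim Ṽ^{↓↑}_{i,j} = dim Ṽ^{↑↓}_{D-i,D-j}`. -/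
theorem drg_tildeV_dim {X : Type*} [Fintype X] [DecidableEq X] (S : QPolyDRG X) (x : X) :
    ∀ i : ℕ, i ≤ S.D → ∀ j : ℕ, j ≤ S.D →
      Module.finrank ℂ (S.tildeV x false false i j) =
        Module.finrank ℂ (S.tildeV x true true (S.D - i) (S.D - j)) ∧
      Module.finrank ℂ (S.tildeV x false true i j) =
        Module.finrank ℂ (S.tildeV x true false (S.D - i) (S.D - j)) :=
  fun _ hi _ hj =>
    ⟨(S.finrank_tildeV_not_not x false false hi hj).symm,
      (S.finrank_tildeV_not_not x false true hi hj).symm⟩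

end
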